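/- Let j be a positive even integer and let a, b be reals with a ≤ -j-1 and |b| < 1. Define the 2j+1 real numbers x_{2s} = -(-1)^s (2s - j - b + a)/4 - 1/4 for 0 ≤ s ≤ j and x_{2s+1} = -(-1)^s (2s - j - b - a)/4 - 1/4 for 0 ≤ s ≤ j-1. Then these 2j+1 numbers are pairwise distinct. -/

import Mathlib

/-- The Bannai-Ito bi-lattice points: `x_{2s} = -(-1)^s (2s-j-b+a)/4 - 1/4`,
`x_{2s+1} = -(-1)^s (2s-j-b-a)/4 - 1/4`. -/
noncomputable def xgrid (j : ℕ) (a b : ℝ) (m : ℕ) : ℝ :=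
  if m % 2 = 0 then
    -(-1 : ℝ) ^ (m / 2) * (2 * ((m / 2 : ℕ) : ℝ) - j - b + a) / 4 - 1/4
  else
    -(-1 : ℝ) ^ (m / 2) * (2 * ((m / 2 : ℕ) : ℝ) - j - b - a) / 4 - 1/4

/-!
Write `-4 x_m - 1 = (-1)^(m/2) (2(m/2) - j - b) + (-1)^(m/2 + m) a`. For `m ≤ 2j` the first
summand has absolute value `< j + 1 ≤ |a|`, so the sign `(-1)^(m/2 + m)` of the `a`-term can be
read off from `x_m`. Once the signs agree, `(-1)^s (2s - j - b) = (-1)^t (2t - j - b)` forces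
`s = t`: for `s, t` of equal parity this is linear, and for opposite parity it would make
`b = s + t - j` an odd integer. Knowing `m/2` and the sign then recovers the parity of `m`.
-/

lemma mod_two_eq_of_neg_one_pow_eq {R : Type*} [Monoid R] [HasDistribNeg R] (hR : (-1 : R) ≠ 1)
    {m n : ℕ} (h : (-1 : R) ^ m = (-1) ^ n) : m % 2 = n % 2 := by
  rw [neg_one_pow_eq_ite, neg_one_pow_eq_ite] at h
  rcases Nat.even_or_odd m with hm | hm <;> rcases Nat.even_or_odd n with hn | hn <;>
    simp_all [Nat.even_iff, Nat.odd_iff, hR.symm]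

lemma neg_one_pow_eq_of_add_mul_eq {K : Type*} [Field K] [LinearOrder K] [IsStrictOrderedRing K]
    {u v a : K} {k l : ℕ} (hu : |u| < |a|) (hv : |v| < |a|)
    (h : u + (-1) ^ k * a = v + (-1) ^ l * a) : (-1 : K) ^ k = (-1) ^ l := by
  have hlt : |v - u| < 2 * |a| := by linarith [abs_sub v u]
  rcases neg_one_pow_eq_or K k with hk | hk <;> rcases neg_one_pow_eq_or K l with hl | hl <;>
    rw [hk, hl] at h ⊢
  · rw [show v - u = 2 * a by linarith, abs_mul] at hlt
    norm_num at hlt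
  · rw [show v - u = -(2 * a) by linarith, abs_neg, abs_mul] at hlt
    norm_num at hlt

lemma two_mul_sub_ne_neg {j n k : ℕ} {b : ℝ} (hj : Even j) (hb : |b| < 1) (hnk : Odd (n + k)) :
    2 * (n : ℝ) - j - b ≠ -(2 * (k : ℝ) - j - b) := by
  intro h
  have hb_int : b = ((n + k - j : ℤ) : ℝ) := by push_cast; linarith
  rw [hb_int, ← Int.cast_abs, ← Int.cast_one, Int.cast_lt, Int.abs_lt_one_iff] at hb
  obtain ⟨r, hr⟩ := hj
  obtain ⟨q, hq⟩ := hnk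
  omega

lemma eq_of_neg_one_pow_mul_eq {j n k : ℕ} {b : ℝ} (hj : Even j) (hb : |b| < 1)
    (h : (-1) ^ n * (2 * (n : ℝ) - j - b) = (-1) ^ k * (2 * (k : ℝ) - j - b)) : n = k := by
  rcases Nat.even_or_odd n with hn | hn <;> rcases Nat.even_or_odd k with hk | hk <;>
    simp only [hn.neg_one_pow, hk.neg_one_pow, one_mul, neg_one_mul] at h
  · exact_mod_cast (by linarith : (n : ℝ) = k)
  · exact absurd h (two_mul_sub_ne_neg hj hb (hn.add_odd hk))
  · exact absurd h.symm (two_mul_sub_ne_neg hj hb (hk.add_odd hn))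
  · exact_mod_cast (by linarith : (n : ℝ) = k)

lemma xgrid_eq (j : ℕ) (a b : ℝ) (m : ℕ) :
    xgrid j a b m =
      -((-1) ^ (m / 2) * (2 * ((m / 2 : ℕ) : ℝ) - j - b) + (-1) ^ (m / 2 + m) * a) / 4 - 1 / 4 := by
  rw [xgrid, pow_add]
  rcases Nat.even_or_odd m with hm | hm
  · simp only [Nat.even_iff.mp hm, hm.neg_one_pow, if_true]
    ring
  · simp only [Nat.odd_iff.mp hm, hm.neg_one_pow, one_ne_zero, if_false]
    ring

lemma abs_neg_one_pow_mul_two_mul_sub_lt {j n : ℕ} {a b : ℝ} (hn : n ≤ j)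
    (ha : a ≤ -(j : ℝ) - 1) (hb : |b| < 1) :
    |(-1) ^ n * (2 * (n : ℝ) - j - b)| < |a| := by
  have hn' : (n : ℝ) ≤ j := by exact_mod_cast hn
  have hn0 : (0 : ℝ) ≤ n := n.cast_nonneg
  rw [abs_mul, abs_neg_one_pow, one_mul, abs_of_neg (by linarith : a < 0), abs_lt]
  rw [abs_lt] at hb
  constructor <;> linarith

theorem stmt6_general (j : ℕ) (hj : Even j) (a b : ℝ)
    (ha : a ≤ -(j : ℝ) - 1) (hb : |b| < 1) :
    ∀ s ≤ 2 * j, ∀ t ≤ 2 * j, s ≠ t → xgrid j a b s ≠ xgrid j a b t := by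
  intro s hs t ht hst heq
  rw [xgrid_eq, xgrid_eq] at heq
  have bound (m : ℕ) (hm : m ≤ 2 * j) := abs_neg_one_pow_mul_two_mul_sub_lt (n := m / 2)
    (by omega) ha hb
  have hsign : (-1 : ℝ) ^ (s / 2 + s) = (-1) ^ (t / 2 + t) :=
    neg_one_pow_eq_of_add_mul_eq (bound s hs) (bound t ht) (by linarith)
  have hhalf : s / 2 = t / 2 :=
    eq_of_neg_one_pow_mul_eq hj hb (by rw [hsign] at heq; linarith)
  have hpar : s % 2 = t % 2 := by
    rw [pow_add, pow_add, hhalf] at hsign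
    exact mod_two_eq_of_neg_one_pow_eq (by norm_num) (mul_left_cancel₀ (by simp) hsign)
  omega

/-- The `2j+1` points of the Bannai-Ito bi-lattice are pairwise distinct when
`a ≤ -j-1` and `|b| < 1`. -/
theorem stmt6 (j : ℕ) (hj : Even j) (hj0 : 0 < j) (a b : ℝ)
    (ha : a ≤ -(j : ℝ) - 1) (hb : |b| < 1) :
    ∀ s ≤ 2 * j, ∀ t ≤ 2 * j, s ≠ t → xgrid j a b s ≠ xgrid j a b t :=
  stmt6_general j hj a b ha hb
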